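/- For β ∈ ℕ (β ≥ 1) let S_β be the piecewise-linear firing rate S_β(x) = 1 for x > 1/β, S_β(x) = 1/2 + (βx)/2 for -1/β ≤ x ≤ 1/β, S_β(x) = 0 for x < -1/β, and define the shifted firing rates S̄_β(x) = S_β(x + (-1)^β/(2β)). Then the sequence (S̄_β) satisfies Assumption A, and S̄_β(x) converges as β → ∞ to the Heaviside function H(x) for every x ≠ 0, while S̄_β(0) = 3/4 when β is even and S̄_β(0) = 1/4 when β is odd. -/

import Mathlib

open Set Finset Filter MeasureTheory

/-- The Heaviside function with `H 0 = 1/2`. -/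
noncomputable def Heaviside (x : ℝ) : ℝ :=
  if x < 0 then 0 else if x = 0 then 1/2 else 1

/-- The piecewise linear firing rate function with slope `β/2` (see (20) in the paper). -/
noncomputable def Spl (β : ℕ) (x : ℝ) : ℝ :=
  if 1 / (β : ℝ) < x then 1
  else if x < -(1 / (β : ℝ)) then 0
  else 1/2 + (β : ℝ) * x / 2

/-- The shifted firing rate functions `S̄_β(x) = S_β(x + (-1)^β/(2β))`. -/
noncomputable def SplBar (β : ℕ) (x : ℝ) : ℝ :=
  Spl β (x + (-1 : ℝ) ^ β / (2 * (β : ℝ)))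

/-! For `β ≠ 0`, `Spl β` is the affine map `1/2 + βx/2` clamped to `[0, 1]`, which gives the
Lipschitz bound and the range. The shift has size `1/(2β)`, so `SplBar β` agrees with the
Heaviside function on all of `|x| > 3/(2β)`; this uniform statement gives both limits. -/

lemma heaviside_of_neg {x : ℝ} (hx : x < 0) : Heaviside x = 0 := by
  simp [Heaviside, hx]

lemma heaviside_of_pos {x : ℝ} (hx : 0 < x) : Heaviside x = 1 := by
  simp [Heaviside, hx.not_gt, hx.ne']

lemma spl_eq_clamp {β : ℕ} (hβ : β ≠ 0) (x : ℝ) :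
    Spl β x = max 0 (min 1 (1 / 2 + (β : ℝ) * x / 2)) := by
  have hb : (0 : ℝ) < β := by positivity
  unfold Spl
  split_ifs with h₁ h₂
  · have : 1 < (β : ℝ) * x := by rwa [div_lt_iff₀' hb] at h₁
    rw [min_eq_left (by linarith), max_eq_right zero_le_one]
  · have : (β : ℝ) * x < -1 := by rwa [← neg_div, lt_div_iff₀' hb] at h₂
    rw [min_eq_right (by linarith), max_eq_left (by linarith)]
  · have : (β : ℝ) * x ≤ 1 := by rwa [not_lt, le_div_iff₀' hb] at h₁
    have : -1 ≤ (β : ℝ) * x := by rwa [not_lt, ← neg_div, div_le_iff₀' hb] at h₂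
    rw [min_eq_right (by linarith), max_eq_right (by linarith)]

lemma spl_mem_Icc {β : ℕ} (hβ : β ≠ 0) (x : ℝ) : Spl β x ∈ Icc (0 : ℝ) 1 := by
  rw [spl_eq_clamp hβ]
  exact ⟨le_max_left _ _, max_le zero_le_one (min_le_left _ _)⟩

lemma lipschitzWith_spl {β : ℕ} (hβ : β ≠ 0) : LipschitzWith (β / 2) (Spl β) := by
  have affine : LipschitzWith (β / 2) fun x : ℝ => 1 / 2 + (β : ℝ) * x / 2 := by
    refine LipschitzWith.of_dist_le_mul fun x y => le_of_eq ?_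
    push_cast
    rw [Real.dist_eq, Real.dist_eq, ← abs_of_nonneg (by positivity : (0 : ℝ) ≤ β / 2), ← abs_mul]
    ring_nf
  simpa only [funext (spl_eq_clamp hβ)] using (affine.const_min 1).const_max 0

lemma lipschitzWith_splBar {β : ℕ} (hβ : β ≠ 0) : LipschitzWith (β / 2) (SplBar β) := by
  have h := (lipschitzWith_spl hβ).comp (isometry_add_right ((-1 : ℝ) ^ β / (2 * β))).lipschitz
  rwa [mul_one] at h

lemma spl_eq_zero {β : ℕ} (hβ : β ≠ 0) {x : ℝ} (hx : (β : ℝ) * x < -1) : Spl β x = 0 := by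
  rw [spl_eq_clamp hβ, max_eq_left (min_le_of_right_le (by linarith))]

lemma spl_eq_one {β : ℕ} (hβ : β ≠ 0) {x : ℝ} (hx : 1 < (β : ℝ) * x) : Spl β x = 1 := by
  rw [spl_eq_clamp hβ, min_eq_left (by linarith), max_eq_right zero_le_one]

lemma mul_splBar_shift {β : ℕ} (hβ : β ≠ 0) :
    (β : ℝ) * ((-1) ^ β / (2 * β)) = (-1) ^ β / 2 := by
  field_simp

lemma splBar_eq_heaviside {β : ℕ} (hβ : β ≠ 0) {x : ℝ} (hx : 3 / 2 < (β : ℝ) * |x|) :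
    SplBar β x = Heaviside x := by
  have hshift : |(β : ℝ) * ((-1) ^ β / (2 * β))| = 1 / 2 := by
    rw [mul_splBar_shift hβ, abs_div, abs_neg_one_pow, abs_two]
  obtain ⟨hlo, hhi⟩ := abs_le.mp hshift.le
  unfold SplBar
  rcases lt_or_gt_of_ne (show x ≠ 0 by rintro rfl; simp at hx; linarith) with hx0 | hx0
  · rw [abs_of_neg hx0] at hx
    rw [heaviside_of_neg hx0, spl_eq_zero hβ (by rw [mul_add]; linarith)]
  · rw [abs_of_pos hx0] at hx
    rw [heaviside_of_pos hx0, spl_eq_one hβ (by rw [mul_add]; linarith)]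

lemma eventually_splBar_eq_heaviside {δ : ℝ} (hδ : 0 < δ) :
    ∀ᶠ β : ℕ in atTop, ∀ x : ℝ, δ < |x| → SplBar β x = Heaviside x := by
  filter_upwards [(tendsto_const_div_atTop_nhds_zero_nat (3 / 2 : ℝ)).eventually (gt_mem_nhds hδ),
    eventually_ne_atTop 0] with β hβδ hβ x hx
  have hb : (0 : ℝ) < β := by positivity
  refine splBar_eq_heaviside hβ ?_
  rw [div_lt_iff₀ hb] at hβδ
  nlinarith

lemma splBar_zero_of_even {β : ℕ} (hβ : β ≠ 0) (he : Even β) : SplBar β 0 = 3 / 4 := by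
  rw [SplBar, zero_add, spl_eq_clamp hβ, mul_splBar_shift hβ, he.neg_one_pow]
  norm_num

lemma splBar_zero_of_odd {β : ℕ} (hβ : β ≠ 0) (ho : Odd β) : SplBar β 0 = 1 / 4 := by
  rw [SplBar, zero_add, spl_eq_clamp hβ, mul_splBar_shift hβ, ho.neg_one_pow]
  norm_num

theorem stmt_16 :
    -- Assumption A for the shifted sequence
    (∀ β : ℕ, 1 ≤ β → ∃ K : NNReal, LipschitzWith K (SplBar β)) ∧
    (∀ β : ℕ, 1 ≤ β → ∀ x : ℝ, SplBar β x ∈ Set.Icc (0:ℝ) 1) ∧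
    (∀ ε > (0:ℝ), ∀ δ > (0:ℝ), ∃ Q : ℕ, ∀ β : ℕ, β > Q →
      (∀ x < -δ, |SplBar β x| < ε) ∧ (∀ x > δ, |1 - SplBar β x| < ε)) ∧
    -- pointwise convergence to the Heaviside function away from 0
    (∀ x : ℝ, x ≠ 0 →
      Filter.Tendsto (fun β => SplBar β x) Filter.atTop (nhds (Heaviside x))) ∧
    -- values at the threshold
    (∀ β : ℕ, 1 ≤ β → Even β → SplBar β 0 = 3/4) ∧
    (∀ β : ℕ, 1 ≤ β → Odd β → SplBar β 0 = 1/4) := by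
  refine ⟨fun β hβ => ⟨_, lipschitzWith_splBar (by omega)⟩, fun β hβ x => spl_mem_Icc (by omega) _,
    fun ε hε δ hδ => ?_, fun x hx => ?_, fun β hβ => splBar_zero_of_even (by omega),
    fun β hβ => splBar_zero_of_odd (by omega)⟩
  · obtain ⟨Q, hQ⟩ := eventually_atTop.mp (eventually_splBar_eq_heaviside hδ)
    refine ⟨Q, fun β hβ => ⟨fun x hx => ?_, fun x hx => ?_⟩⟩
    · rw [hQ β hβ.le x (lt_abs.mpr (Or.inr (by linarith))), heaviside_of_neg (by linarith)]
      simpa using hε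
    · rw [hQ β hβ.le x (lt_abs.mpr (Or.inl hx)), heaviside_of_pos (by linarith)]
      simpa using hε
  · have hx' : |x| / 2 < |x| := half_lt_self (abs_pos.mpr hx)
    exact tendsto_const_nhds.congr' <|
      (eventually_splBar_eq_heaviside (by linarith)).mono fun β hβ => (hβ x hx').symm
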